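/- arXiv:2210.00050 — 2 statements merged into one kernel-verified Lean document; each statement's English description precedes it below -/
import Mathlib

section
/- Proposition 2 (per-constraint, distribution-free form): Let z be a real random variable on a probability space (Ω, ℱ, P) with finite second moment, mean z̄ and variance σ². Let b, f ∈ ℝ, β ≥ 0, δ ∈ (0, 1], and ε¹, ε² ∈ (0, 1) with ε¹ + ε² ≥ 2 − βδ. If z̄ + 𝒬(ε¹)·σ ≤ f − b and −z̄ + 𝒬(ε²)·σ ≤ f + b, then P(−f − b ≤ z ≤ f − b) ≥ 1 − βδ. Since the hypothesis involves only the mean and variance of z, the conclusion holds for every distribution of z in the moment-based ambiguity set determined by z̄ and σ². -/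
/-!
Markov's inequality for `(Y + u)²`, with the shift `u = σ / k`, gives Cantelli's bound
`P(Y ≥ kσ) ≤ 1 / (1 + k²)` for a centred `Y` of variance `σ²`. For `k = 𝒬(ε)` this bound is
exactly `1 - ε`, so the two tails of `z - z̄` cut off by the hypotheses have total probability at
most `(1 - ε¹) + (1 - ε²) ≤ βδ`. Using strict tails keeps this valid when `σ = 0`, where they are
null.
-/

open MeasureTheory

/-- The DR quantile function `𝒬(α) = √(α/(1-α))`. -/
noncomputable def drQ (α : ℝ) : ℝ := Real.sqrt (α / (1 - α))

lemma drQ_pos {ε : ℝ} (hε : ε ∈ Set.Ioo (0 : ℝ) 1) : 0 < drQ ε :=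
  Real.sqrt_pos.mpr (div_pos hε.1 (sub_pos.mpr hε.2))

lemma inv_one_add_drQ_sq {ε : ℝ} (hε : ε ∈ Set.Ioo (0 : ℝ) 1) :
    (1 + drQ ε ^ 2)⁻¹ = 1 - ε := by
  have hε' : 1 - ε ≠ 0 := (sub_pos.mpr hε.2).ne'
  rw [drQ, Real.sq_sqrt (div_pos hε.1 (sub_pos.mpr hε.2)).le]
  field_simp
  ring

section Cantelli

variable {Ω : Type*} [MeasurableSpace Ω] {P : Measure Ω} [IsProbabilityMeasure P] {Y : Ω → ℝ}

lemma integral_add_const_sq (hY : MemLp Y 2 P) (hmean : ∫ ω, Y ω ∂P = 0) (u : ℝ) :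
    ∫ ω, (Y ω + u) ^ 2 ∂P = ∫ ω, Y ω ^ 2 ∂P + u ^ 2 := by
  have hY1 : Integrable Y P := hY.integrable one_le_two
  calc ∫ ω, (Y ω + u) ^ 2 ∂P = ∫ ω, (Y ω ^ 2 + 2 * u * Y ω + u ^ 2) ∂P := by
        congr 1; ext ω; ring
    _ = ∫ ω, Y ω ^ 2 ∂P + u ^ 2 := by
        have hlin : Integrable (fun ω => 2 * u * Y ω) P := hY1.const_mul _
        rw [integral_add (f := fun ω => Y ω ^ 2 + 2 * u * Y ω) (hY.integrable_sq.add hlin)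
            (integrable_const _),
          integral_add hY.integrable_sq hlin, integral_const_mul, hmean]
        simp

lemma mul_measureReal_ge_le_integral_sq_add_sq (hY : MemLp Y 2 P) (hmean : ∫ ω, Y ω ∂P = 0)
    {t u : ℝ} (htu : 0 ≤ t + u) :
    (t + u) ^ 2 * P.real {ω | t ≤ Y ω} ≤ ∫ ω, Y ω ^ 2 ∂P + u ^ 2 := by
  rw [← integral_add_const_sq hY hmean]
  calc (t + u) ^ 2 * P.real {ω | t ≤ Y ω}
      ≤ (t + u) ^ 2 * P.real {ω | (t + u) ^ 2 ≤ (Y ω + u) ^ 2} := by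
        refine mul_le_mul_of_nonneg_left (measureReal_mono fun ω (hω : t ≤ Y ω) => ?_)
          (sq_nonneg _)
        exact pow_le_pow_left₀ htu (by linarith) 2
    _ ≤ ∫ ω, (Y ω + u) ^ 2 ∂P :=
        mul_meas_ge_le_integral_of_nonneg (ae_of_all _ fun ω => sq_nonneg _)
          (hY.add (memLp_const u)).integrable_sq _

/-- Cantelli's inequality. -/
lemma measureReal_ge_mul_le_inv_one_add_sq (hY : MemLp Y 2 P) (hmean : ∫ ω, Y ω ∂P = 0)
    {σ k : ℝ} (hvar : ∫ ω, Y ω ^ 2 ∂P = σ ^ 2) (hσ : 0 < σ) (hk : 0 < k) :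
    P.real {ω | k * σ ≤ Y ω} ≤ (1 + k ^ 2)⁻¹ := by
  have hmarkov := mul_measureReal_ge_le_integral_sq_add_sq hY hmean
    (t := k * σ) (u := σ / k) (by positivity)
  have hsq : (k * σ + σ / k) ^ 2 = (1 + k ^ 2) * (σ ^ 2 + (σ / k) ^ 2) := by
    field_simp; ring
  rw [hvar, hsq] at hmarkov
  rw [← one_div, le_div_iff₀ (by positivity)]
  nlinarith [measureReal_nonneg (μ := P) (s := {ω | k * σ ≤ Y ω}),
    show 0 < σ ^ 2 + (σ / k) ^ 2 by positivity]

lemma measureReal_gt_mul_le_inv_one_add_sq (hY : MemLp Y 2 P) (hmean : ∫ ω, Y ω ∂P = 0)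
    {σ k : ℝ} (hvar : ∫ ω, Y ω ^ 2 ∂P = σ ^ 2) (hσ : 0 ≤ σ) (hk : 0 < k) :
    P.real {ω | k * σ < Y ω} ≤ (1 + k ^ 2)⁻¹ := by
  rcases hσ.eq_or_lt with rfl | hσ
  · have hY0 : ∀ᵐ ω ∂P, Y ω ^ 2 = 0 :=
      (integral_eq_zero_iff_of_nonneg (fun ω => sq_nonneg (Y ω)) hY.integrable_sq).mp
        (by simpa using hvar)
    have hnull : P.real {ω | k * 0 < Y ω} = 0 := by
      have hY0' : ∀ᵐ ω ∂P, ¬ k * 0 < Y ω :=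
        hY0.mono fun ω hω => by simp_all
      rw [measureReal_eq_zero_iff]
      simpa using ae_iff.mp hY0'
    rw [hnull]
    positivity
  · exact (measureReal_mono fun ω (hω : k * σ < Y ω) => hω.le).trans
      (measureReal_ge_mul_le_inv_one_add_sq hY hmean hvar hσ hk)

lemma one_sub_inv_sub_inv_le_measureReal_preimage_Icc {z : Ω → ℝ} (hz : MemLp z 2 P)
    {m σ k₁ k₂ : ℝ} (hmean : ∫ ω, z ω ∂P = m) (hvar : ∫ ω, (z ω - m) ^ 2 ∂P = σ ^ 2)
    (hσ : 0 ≤ σ) (hk₁ : 0 < k₁) (hk₂ : 0 < k₂) :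
    1 - (1 + k₁ ^ 2)⁻¹ - (1 + k₂ ^ 2)⁻¹ ≤ P.real (z ⁻¹' Set.Icc (m - k₂ * σ) (m + k₁ * σ)) := by
  have hY : MemLp (fun ω => z ω - m) 2 P := hz.sub (memLp_const m)
  have hcentered : ∫ ω, (z ω - m) ∂P = 0 := by
    rw [integral_sub (hz.integrable one_le_two) (integrable_const m), hmean]
    simp
  have hupper := measureReal_gt_mul_le_inv_one_add_sq hY hcentered hvar hσ hk₁
  have hlower := measureReal_gt_mul_le_inv_one_add_sq (Y := fun ω => -(z ω - m)) hY.neg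
    (by rw [integral_neg, hcentered, neg_zero]) (by simpa only [neg_sq] using hvar) hσ hk₂
  have hcover : Set.univ ⊆ z ⁻¹' Set.Icc (m - k₂ * σ) (m + k₁ * σ) ∪
      {ω | k₁ * σ < z ω - m} ∪ {ω | k₂ * σ < -(z ω - m)} := by
    intro ω _
    rcases le_or_gt (z ω - m) (k₁ * σ) with hhi | hhi
    · rcases le_or_gt (-(z ω - m)) (k₂ * σ) with hlo | hlo
      · exact Or.inl (Or.inl ⟨by linarith, by linarith⟩)
      · exact Or.inr hlo
    · exact Or.inl (Or.inr hhi)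
  have hunion := (measureReal_mono (μ := P) hcover).trans ((measureReal_union_le _ _).trans
    (add_le_add_left (measureReal_union_le _ _) _))
  rw [probReal_univ] at hunion
  linarith

end Cantelli

theorem dr_two_sided_constraint_general {Ω : Type*} [MeasurableSpace Ω]
    (P : Measure Ω) [IsProbabilityMeasure P]
    (z : Ω → ℝ) (hz2 : MemLp z 2 P)
    (zbar σ : ℝ) (hσ : 0 ≤ σ)
    (hmean : ∫ ω, z ω ∂P = zbar)
    (hvar : ∫ ω, (z ω - zbar) ^ 2 ∂P = σ ^ 2)
    (b f β δ ε1 ε2 : ℝ)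
    (hε1 : ε1 ∈ Set.Ioo (0 : ℝ) 1) (hε2 : ε2 ∈ Set.Ioo (0 : ℝ) 1)
    (hsum : 2 - β * δ ≤ ε1 + ε2)
    (h1 : zbar + drQ ε1 * σ ≤ f - b)
    (h2 : -zbar + drQ ε2 * σ ≤ f + b) :
    ENNReal.ofReal (1 - β * δ) ≤ P {ω | -f - b ≤ z ω ∧ z ω ≤ f - b} := by
  have hcantelli := one_sub_inv_sub_inv_le_measureReal_preimage_Icc hz2 hmean hvar hσ
    (drQ_pos hε1) (drQ_pos hε2)
  rw [inv_one_add_drQ_sq hε1, inv_one_add_drQ_sq hε2] at hcantelli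
  have hsub : z ⁻¹' Set.Icc (zbar - drQ ε2 * σ) (zbar + drQ ε1 * σ) ⊆
      {ω | -f - b ≤ z ω ∧ z ω ≤ f - b} :=
    fun ω ⟨hlo, hhi⟩ => ⟨by linarith, by linarith⟩
  apply ENNReal.ofReal_le_of_le_toReal
  rw [← measureReal_def]
  linarith [measureReal_mono (μ := P) hsub]

/-- Proposition 2 (per-constraint, distribution-free form): a two-sided Cantelli-type
tightening on the mean and standard deviation of `z` implies the two-sided risk bound
`P(-f - b ≤ z ≤ f - b) ≥ 1 - β δ`, for every distribution of `z` with the given mean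
and variance. -/
theorem dr_two_sided_constraint {Ω : Type*} [MeasurableSpace Ω]
    (P : Measure Ω) [IsProbabilityMeasure P]
    (z : Ω → ℝ) (hz : Measurable z) (hz2 : MemLp z 2 P)
    (zbar σ : ℝ) (hσ : 0 ≤ σ)
    (hmean : ∫ ω, z ω ∂P = zbar)
    (hvar : ∫ ω, (z ω - zbar) ^ 2 ∂P = σ ^ 2)
    (b f β δ ε1 ε2 : ℝ) (hβ : 0 ≤ β) (hδ : δ ∈ Set.Ioc (0 : ℝ) 1)
    (hε1 : ε1 ∈ Set.Ioo (0 : ℝ) 1) (hε2 : ε2 ∈ Set.Ioo (0 : ℝ) 1)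
    (hsum : 2 - β * δ ≤ ε1 + ε2)
    (h1 : zbar + drQ ε1 * σ ≤ f - b)
    (h2 : -zbar + drQ ε2 * σ ≤ f + b) :
    ENNReal.ofReal (1 - β * δ) ≤ P {ω | -f - b ≤ z ω ∧ z ω ≤ f - b} :=
  dr_two_sided_constraint_general P z hz2 zbar σ hσ hmean hvar b f β δ ε1 ε2 hε1 hε2 hsum h1 h2
end

section
/- Combined conic constraint guarantee (end of Section IV-D): Let x be a random vector in ℝ^n with finite second moments, mean x̄ and covariance Σ. Let A be an n×n real matrix with rows a₁ᵀ, …, a_nᵀ, let b ∈ ℝ^n with entries b₁, …, b_n, c ∈ ℝ^n, d ∈ ℝ, and δ ∈ (0, 1]. Suppose there exist f₁, …, f_n ≥ 0, β₁, …, β_n ≥ 0 with Σᵢ βᵢ = 1, and ε¹ᵢ, ε²ᵢ ∈ (0,1) with ε¹ᵢ + ε²ᵢ ≥ 2 − βᵢδ for each i, such that: (a) Σᵢ fᵢ² ≤ (cᵀx̄ + d)², with cᵀx̄ + d ≥ 0; (b) aᵢᵀx̄ + 𝒬(ε¹ᵢ)·√(aᵢᵀΣaᵢ) ≤ fᵢ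 − bᵢ for each i; and (c) −aᵢᵀx̄ + 𝒬(ε²ᵢ)·√(aᵢᵀΣaᵢ) ≤ fᵢ + bᵢ for each i. Then P(‖Ax + b‖₂ ≤ cᵀx̄ + d) ≥ 1 − δ, and this holds for every distribution of x in the moment-based ambiguity set 𝒫(x̄, Σ). -/
/-!
Write `yᵢ = aᵢᵀx + bᵢ`. Its mean is `aᵢᵀx̄ + bᵢ` and its variance `aᵢᵀΣaᵢ`, whatever the
distribution in `𝒫(x̄, Σ)`, so Cantelli's inequality `P(y ≥ E y + t) ≤ Var y / (Var y + t²)`,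
applied with `t = 𝒬(ε) √(Var y)`, turns (b) and (c) into `P(yᵢ > fᵢ) ≤ 1 - ε¹ᵢ` and
`P(-yᵢ > fᵢ) ≤ 1 - ε²ᵢ`. Outside the union of these events `|yᵢ| ≤ fᵢ` for all `i`, so
`‖Ax + b‖₂ ≤ √(Σ fᵢ²) ≤ cᵀx̄ + d` by (a), and the union has probability at most
`Σᵢ (2 - ε¹ᵢ - ε²ᵢ) ≤ Σᵢ βᵢδ = δ`.
-/

open MeasureTheory

/-- Euclidean norm of a vector in `ℝ^n`. -/
noncomputable def euclNorm {n : ℕ} (v : Fin n → ℝ) : ℝ :=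
  Real.sqrt (∑ i, v i ^ 2)

open ProbabilityTheory

section Tails

variable {Ω : Type*} [MeasurableSpace Ω] {μ : Measure Ω} [IsProbabilityMeasure μ] {X : Ω → ℝ}

lemma integral_sub_integral_add_sq (hX : MemLp X 2 μ) (u : ℝ) :
    ∫ ω, (X ω - μ[X] + u) ^ 2 ∂μ = Var[X; μ] + u ^ 2 := by
  have hY : MemLp (fun ω => X ω + (u - μ[X])) 2 μ := hX.add (memLp_const _)
  have hmean : μ[fun ω => X ω + (u - μ[X])] = u := by
    rw [integral_add (hX.integrable one_le_two) (integrable_const _), integral_const]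
    simp
  have h := variance_eq_sub hY
  rw [variance_add_const hX.aestronglyMeasurable, hmean] at h
  rw [h, sub_add_cancel]
  congr 1 with ω
  simp only [Pi.pow_apply]
  ring

theorem meas_ge_add_le_variance_div (hX : MemLp X 2 μ) {t : ℝ} (ht : 0 < t) :
    μ {ω | μ[X] + t ≤ X ω} ≤ ENNReal.ofReal (Var[X; μ] / (Var[X; μ] + t ^ 2)) := by
  set v := Var[X; μ]
  have hv : 0 ≤ v := variance_nonneg X μ
  -- Markov's inequality for `(X - μ[X] + u) ^ 2`; the shift `u = v / t` optimises the bound.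
  set u := v / t
  have hsub : {ω | μ[X] + t ≤ X ω} ⊆ {ω | (t + u) ^ 2 ≤ (X ω - μ[X] + u) ^ 2} :=
    fun ω (hω : μ[X] + t ≤ X ω) =>
      pow_le_pow_left₀ (by positivity : (0 : ℝ) ≤ t + u) (by linarith) 2
  have hmarkov := mul_meas_ge_le_integral_of_nonneg
    (.of_forall fun ω => sq_nonneg (X ω - μ[X] + u))
    ((hX.sub (memLp_const _)).add (memLp_const u)).integrable_sq ((t + u) ^ 2)
  rw [integral_sub_integral_add_sq hX u] at hmarkov
  have hratio : (v + u ^ 2) / (t + u) ^ 2 = v / (v + t ^ 2) := by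
    simp only [u]
    field_simp
    ring
  rw [← ofReal_measureReal, ← hratio]
  refine ENNReal.ofReal_le_ofReal ((le_div_iff₀ (by positivity)).mpr ?_)
  calc μ.real {ω | μ[X] + t ≤ X ω} * (t + u) ^ 2
      ≤ μ.real {ω | (t + u) ^ 2 ≤ (X ω - μ[X] + u) ^ 2} * (t + u) ^ 2 :=
        mul_le_mul_of_nonneg_right (measureReal_mono hsub) (sq_nonneg _)
    _ ≤ v + u ^ 2 := by linarith

theorem meas_gt_le_one_sub_of_drQ (hX : MemLp X 2 μ) {ε F : ℝ} (hε : ε ∈ Set.Ioo (0 : ℝ) 1)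
    (h : μ[X] + drQ ε * √Var[X; μ] ≤ F) : μ {ω | F < X ω} ≤ ENNReal.ofReal (1 - ε) := by
  rcases (variance_nonneg X μ).eq_or_lt with hv | hv
  · have hmF : μ[X] ≤ F := by simpa [← hv] using h
    have hnull : μ {ω | F < X ω} = 0 := by
      refine measure_mono_null ?_ (ae_iff.mp (ae_eq_integral_of_variance_eq_zero hX hv.symm))
      intro ω (hω : F < X ω) (hω' : X ω = μ[X])
      linarith
    simp [hnull]
  · have hε' : 0 < 1 - ε := sub_pos.mpr hε.2
    have hq : 0 < drQ ε := Real.sqrt_pos.mpr (div_pos hε.1 hε')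
    have hsq : (drQ ε * √Var[X; μ]) ^ 2 = ε / (1 - ε) * Var[X; μ] := by
      rw [mul_pow, drQ, Real.sq_sqrt (div_pos hε.1 hε').le, Real.sq_sqrt hv.le]
    calc μ {ω | F < X ω} ≤ μ {ω | μ[X] + drQ ε * √Var[X; μ] ≤ X ω} :=
          measure_mono fun ω hω => by simp only [Set.mem_ofPred_eq] at hω ⊢; linarith
      _ ≤ _ := meas_ge_add_le_variance_div hX (by positivity)
      _ = ENNReal.ofReal (1 - ε) := by
          rw [hsq]
          congr 1
          field_simp
          ring

theorem meas_abs_gt_le_of_drQ (hX : MemLp X 2 μ) {ε₁ ε₂ F : ℝ}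
    (hε₁ : ε₁ ∈ Set.Ioo (0 : ℝ) 1) (hε₂ : ε₂ ∈ Set.Ioo (0 : ℝ) 1)
    (h₁ : μ[X] + drQ ε₁ * √Var[X; μ] ≤ F) (h₂ : -μ[X] + drQ ε₂ * √Var[X; μ] ≤ F) :
    μ {ω | F < |X ω|} ≤ ENNReal.ofReal ((1 - ε₁) + (1 - ε₂)) := by
  have hneg : μ {ω | F < -X ω} ≤ ENNReal.ofReal (1 - ε₂) :=
    meas_gt_le_one_sub_of_drQ (X := fun ω => -X ω) hX.neg hε₂
      (by rwa [integral_neg, variance_fun_neg])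
  calc μ {ω | F < |X ω|} = μ ({ω | F < X ω} ∪ {ω | F < -X ω}) := by
        congr 1
        ext ω
        simp [lt_abs]
    _ ≤ μ {ω | F < X ω} + μ {ω | F < -X ω} := measure_union_le _ _
    _ ≤ ENNReal.ofReal (1 - ε₁) + ENNReal.ofReal (1 - ε₂) :=
        add_le_add (meas_gt_le_one_sub_of_drQ hX hε₁ h₁) hneg
    _ = _ := (ENNReal.ofReal_add (by linarith [hε₁.2]) (by linarith [hε₂.2])).symm

theorem ofReal_one_sub_sum_le_measure {ι : Type*} [Fintype ι] {s : Set Ω} {t : ι → Set Ω}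
    {p : ι → ℝ} (hp : ∀ i, 0 ≤ p i) (ht : ∀ i, μ (t i) ≤ ENNReal.ofReal (p i))
    (hs : (⋃ i, t i)ᶜ ⊆ s) :
    ENNReal.ofReal (1 - ∑ i, p i) ≤ μ s := by
  have hunion : μ (⋃ i, t i) ≤ ENNReal.ofReal (∑ i, p i) := by
    rw [ENNReal.ofReal_sum_of_nonneg fun i _ => hp i]
    exact (measure_iUnion_fintype_le μ t).trans (Finset.sum_le_sum fun i _ => ht i)
  rw [ENNReal.ofReal_sub _ (Finset.sum_nonneg fun i _ => hp i), ENNReal.ofReal_one,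
    tsub_le_iff_right]
  calc 1 = μ (s ∪ sᶜ) := by rw [Set.union_compl_self, measure_univ]
    _ ≤ μ s + μ sᶜ := measure_union_le _ _
    _ ≤ μ s + μ (⋃ i, t i) := by gcongr; exact Set.compl_subset_comm.mp hs
    _ ≤ μ s + ENNReal.ofReal (∑ i, p i) := by gcongr

end Tails

section RandomVector

variable {Ω ι : Type*} [MeasurableSpace Ω] {μ : Measure Ω} [Fintype ι] {x : Ω → ι → ℝ}

lemma integral_dotProduct (hx : ∀ i, Integrable (fun ω => x ω i) μ) (a : ι → ℝ) :
    ∫ ω, a ⬝ᵥ x ω ∂μ = a ⬝ᵥ fun i => ∫ ω, x ω i ∂μ := by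
  simp only [dotProduct]
  rw [integral_finsetSum _ fun i _ => (hx i).const_mul (a i)]
  simp only [integral_const_mul]

lemma variance_dotProduct [IsFiniteMeasure μ] (hx : ∀ i, MemLp (fun ω => x ω i) 2 μ)
    (a : ι → ℝ) :
    Var[fun ω => a ⬝ᵥ x ω; μ]
      = a ⬝ᵥ (Matrix.of fun i j => cov[fun ω => x ω i, fun ω => x ω j; μ]).mulVec a := by
  have hterm : ∀ i, MemLp (fun ω => a i * x ω i) 2 μ := fun i => (hx i).const_mul (a i)
  simp only [dotProduct]
  rw [← covariance_self (memLp_finsetSum _ fun i _ => hterm i).aemeasurable,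
    covariance_fun_sum_fun_sum hterm hterm]
  simp only [covariance_const_mul_left, covariance_const_mul_right, Matrix.mulVec, dotProduct,
    Matrix.of_apply, Finset.mul_sum]
  refine Finset.sum_congr rfl fun i _ => Finset.sum_congr rfl fun j _ => ?_
  ring

end RandomVector

lemma euclNorm_le_of_abs_le {n : ℕ} {v f : Fin n → ℝ} {r : ℝ} (hv : ∀ i, |v i| ≤ f i)
    (hf : ∑ i, f i ^ 2 ≤ r ^ 2) (hr : 0 ≤ r) : euclNorm v ≤ r := by
  rw [euclNorm, Real.sqrt_le_left hr]
  calc ∑ i, v i ^ 2 ≤ ∑ i, f i ^ 2 :=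
        Finset.sum_le_sum fun i _ => sq_le_sq' (abs_le.mp (hv i)).1 (abs_le.mp (hv i)).2
    _ ≤ r ^ 2 := hf

theorem dr_conic_constraint_guarantee_general {Ω : Type*} [MeasurableSpace Ω]
    (P : Measure Ω) [IsProbabilityMeasure P]
    {n : ℕ} (x : Ω → Fin n → ℝ)
    (hx2 : ∀ i, MemLp (fun ω => x ω i) 2 P)
    (xbar : Fin n → ℝ) (S : Matrix (Fin n) (Fin n) ℝ)
    (hmean : ∀ i, ∫ ω, x ω i ∂P = xbar i)
    (hcov : ∀ i j, ∫ ω, (x ω i - xbar i) * (x ω j - xbar j) ∂P = S i j)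
    (A : Matrix (Fin n) (Fin n) ℝ) (b c : Fin n → ℝ) (d δ : ℝ)
    (f β ε1 ε2 : Fin n → ℝ)
    (hβsum : ∑ i, β i = 1)
    (hε1 : ∀ i, ε1 i ∈ Set.Ioo (0 : ℝ) 1) (hε2 : ∀ i, ε2 i ∈ Set.Ioo (0 : ℝ) 1)
    (hεsum : ∀ i, 2 - β i * δ ≤ ε1 i + ε2 i)
    (ha : ∑ i, f i ^ 2 ≤ (dotProduct c xbar + d) ^ 2)
    (ha' : 0 ≤ dotProduct c xbar + d)
    (hb : ∀ i, dotProduct (A i) xbar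
        + drQ (ε1 i) * Real.sqrt (dotProduct (A i) (S.mulVec (A i))) ≤ f i - b i)
    (hc : ∀ i, -dotProduct (A i) xbar
        + drQ (ε2 i) * Real.sqrt (dotProduct (A i) (S.mulVec (A i))) ≤ f i + b i) :
    ENNReal.ofReal (1 - δ)
      ≤ P {ω | euclNorm (A.mulVec (x ω) + b) ≤ dotProduct c xbar + d} := by
  have hrow i : MemLp (fun ω => A i ⬝ᵥ x ω) 2 P := memLp_finsetSum _ fun j _ => (hx2 j).const_mul _
  have hmem_row i : MemLp (fun ω => A i ⬝ᵥ x ω + b i) 2 P := (hrow i).add (memLp_const _)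
  have hmean_row i : P[fun ω => A i ⬝ᵥ x ω + b i] = A i ⬝ᵥ xbar + b i := by
    rw [integral_add ((hrow i).integrable one_le_two) (integrable_const _),
      integral_dotProduct (fun j => (hx2 j).integrable one_le_two), integral_const]
    simp [hmean]
  have hcov_eq : (Matrix.of fun i j => cov[fun ω => x ω i, fun ω => x ω j; P]) = S := by
    ext i j
    simp [covariance, hmean, hcov]
  have hvar_row i : Var[fun ω => A i ⬝ᵥ x ω + b i; P] = A i ⬝ᵥ S.mulVec (A i) := by
    rw [variance_add_const (hrow i).aestronglyMeasurable, variance_dotProduct hx2, hcov_eq]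
  have htail i : P {ω | f i < |A i ⬝ᵥ x ω + b i|} ≤ ENNReal.ofReal ((1 - ε1 i) + (1 - ε2 i)) :=
    meas_abs_gt_le_of_drQ (hmem_row i) (hε1 i) (hε2 i)
      (by rw [hmean_row, hvar_row]; linarith [hb i]) (by rw [hmean_row, hvar_row]; linarith [hc i])
  calc ENNReal.ofReal (1 - δ) ≤ ENNReal.ofReal (1 - ∑ i, ((1 - ε1 i) + (1 - ε2 i))) := by
        refine ENNReal.ofReal_le_ofReal (sub_le_sub_left ?_ 1)
        calc ∑ i, ((1 - ε1 i) + (1 - ε2 i)) ≤ ∑ i, β i * δ :=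
              Finset.sum_le_sum fun i _ => by linarith [hεsum i]
          _ = δ := by rw [← Finset.sum_mul, hβsum, one_mul]
    _ ≤ _ := by
        refine ofReal_one_sub_sum_le_measure (fun i => by linarith [(hε1 i).2, (hε2 i).2]) htail
          fun ω hω => euclNorm_le_of_abs_le (fun i => ?_) ha ha'
        simp only [Set.compl_iUnion, Set.mem_iInter, Set.mem_compl_iff, Set.mem_ofPred_eq,
          not_lt] at hω
        exact hω i

/-- Combined conic constraint guarantee (end of Section IV-D): the convex DR SOC
tightenings (b), (c) together with the norm budget (a) imply the relaxed DR conic risk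
constraint `P(‖Ax + b‖₂ ≤ cᵀx̄ + d) ≥ 1 - δ`, for every distribution of `x` with mean
`x̄` and covariance `Σ`. -/
theorem dr_conic_constraint_guarantee {Ω : Type*} [MeasurableSpace Ω]
    (P : Measure Ω) [IsProbabilityMeasure P]
    {n : ℕ} (x : Ω → Fin n → ℝ)
    (hx : ∀ i, Measurable fun ω => x ω i)
    (hx2 : ∀ i, MemLp (fun ω => x ω i) 2 P)
    (xbar : Fin n → ℝ) (S : Matrix (Fin n) (Fin n) ℝ)
    (hmean : ∀ i, ∫ ω, x ω i ∂P = xbar i)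
    (hcov : ∀ i j, ∫ ω, (x ω i - xbar i) * (x ω j - xbar j) ∂P = S i j)
    (A : Matrix (Fin n) (Fin n) ℝ) (b c : Fin n → ℝ) (d δ : ℝ)
    (hδ : δ ∈ Set.Ioc (0 : ℝ) 1)
    (f β ε1 ε2 : Fin n → ℝ)
    (hf : ∀ i, 0 ≤ f i) (hβ : ∀ i, 0 ≤ β i) (hβsum : ∑ i, β i = 1)
    (hε1 : ∀ i, ε1 i ∈ Set.Ioo (0 : ℝ) 1) (hε2 : ∀ i, ε2 i ∈ Set.Ioo (0 : ℝ) 1)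
    (hεsum : ∀ i, 2 - β i * δ ≤ ε1 i + ε2 i)
    (ha : ∑ i, f i ^ 2 ≤ (dotProduct c xbar + d) ^ 2)
    (ha' : 0 ≤ dotProduct c xbar + d)
    (hb : ∀ i, dotProduct (A i) xbar
        + drQ (ε1 i) * Real.sqrt (dotProduct (A i) (S.mulVec (A i))) ≤ f i - b i)
    (hc : ∀ i, -dotProduct (A i) xbar
        + drQ (ε2 i) * Real.sqrt (dotProduct (A i) (S.mulVec (A i))) ≤ f i + b i) :
    ENNReal.ofReal (1 - δ)
      ≤ P {ω | euclNorm (A.mulVec (x ω) + b) ≤ dotProduct c xbar + d} :=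
  dr_conic_constraint_guarantee_general P x hx2 xbar S hmean hcov A b c d δ f β ε1 ε2 hβsum hε1 hε2
    hεsum ha ha' hb hc
end
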